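/- arXiv:2506.21210 — 4 statements merged into one kernel-verified Lean document; each statement's English description precedes it below -/
import Mathlib

section
/- Let O be a principal ideal domain with fraction field K, and let A = [[a,b],[c,d]] be a 2×2 matrix with entries in O such that Δ := a·d − b·c ≠ 0. Assume Δ divides each of a·b, c·d, a·d and b·c in O. Then there exist λ_1, λ_2 ∈ Kˣ such that every entry of the matrix A·diag(λ_1, λ_2) (computed over K) lies in the image of O, and its determinant is a unit of O; equivalently, A = B·diag(λ_1⁻¹, λ_2⁻¹) in GL_2(K) for some B ∈ GL_2(O). -/
/-- **Scaling columns of a matrix over a PID into `GL_2(O)`.**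
Let `O` be a PID with fraction field `K` and `A = [[a,b],[c,d]]` over `O` with
`Δ = ad - bc ≠ 0` dividing `ab`, `cd`, `ad` and `bc`.  Then there are `λ₁, λ₂ ∈ Kˣ`
such that all entries of `A·diag(λ₁,λ₂)` lie in (the image of) `O` and its determinant
is a unit of `O`; i.e. `A = B·diag(λ₁⁻¹,λ₂⁻¹)` with `B ∈ GL_2(O)`. -/
theorem matrix_column_scaling_into_GL2_of_PID
    {O K : Type*} [CommRing O] [IsDomain O] [IsPrincipalIdealRing O]
    [Field K] [Algebra O K] [IsFractionRing O K]
    (a b c d : O) (hΔ : a * d - b * c ≠ 0)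
    (hab : (a * d - b * c) ∣ a * b) (hcd : (a * d - b * c) ∣ c * d)
    (had : (a * d - b * c) ∣ a * d) (hbc : (a * d - b * c) ∣ b * c) :
    ∃ l₁ l₂ : Kˣ,
      (∀ i j : Fin 2, ∃ r : O,
        ((!![algebraMap O K a, algebraMap O K b; algebraMap O K c, algebraMap O K d] *
            Matrix.diagonal ![(l₁ : K), (l₂ : K)]) i j) = algebraMap O K r)
      ∧
      ∃ u : Oˣ,
        Matrix.det (!![algebraMap O K a, algebraMap O K b;
            algebraMap O K c, algebraMap O K d] * Matrix.diagonal ![(l₁ : K), (l₂ : K)])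
          = algebraMap O K (u : O) := by
  set Δ := a * d - b * c with hΔdef
  obtain ⟨g, hg⟩ := (IsPrincipalIdealRing.principal (Ideal.span {b, d} : Ideal O)).principal
  have hgb : g ∣ b := by
    have : b ∈ Ideal.span ({b, d} : Set O) := Ideal.subset_span (by simp)
    rw [hg, Ideal.submodule_span_eq, Ideal.mem_span_singleton] at this
    exact this
  have hgd : g ∣ d := by
    have : d ∈ Ideal.span ({b, d} : Set O) := Ideal.subset_span (by simp)
    rw [hg, Ideal.submodule_span_eq, Ideal.mem_span_singleton] at this
    exact this
  have hgmem : g ∈ Ideal.span ({b, d} : Set O) := by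
    rw [hg, Ideal.submodule_span_eq]; exact Ideal.mem_span_singleton_self g
  obtain ⟨x, y, hxy⟩ := Ideal.mem_span_pair.mp hgmem
  have hg0 : g ≠ 0 := by
    rintro rfl
    obtain ⟨rb, rfl⟩ := hgb
    obtain ⟨rd, rfl⟩ := hgd
    exact hΔ (by rw [hΔdef]; ring)
  have hΔag : Δ ∣ a * g := by
    have h : a * g = x * (a * b) + y * (a * d) := by rw [← hxy]; ring
    rw [h]; exact dvd_add (hab.mul_left x) (had.mul_left y)
  have hΔcg : Δ ∣ c * g := by
    have h : c * g = x * (b * c) + y * (c * d) := by rw [← hxy]; ring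
    rw [h]; exact dvd_add (hbc.mul_left x) (hcd.mul_left y)
  obtain ⟨p, hp⟩ := hΔag
  obtain ⟨q, hq⟩ := hΔcg
  obtain ⟨rb, hrb⟩ := hgb
  obtain ⟨rd, hrd⟩ := hgd
  set f := algebraMap O K with hf
  have hinj : Function.Injective f := IsFractionRing.injective O K
  have hfΔ : f Δ ≠ 0 := fun h => hΔ (hinj (by simpa using h))
  have hfg : f g ≠ 0 := fun h => hg0 (hinj (by simpa using h))
  refine ⟨Units.mk0 (f g / f Δ) (div_ne_zero hfg hfΔ), Units.mk0 (f g)⁻¹ (inv_ne_zero hfg),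
    ?_, 1, ?_⟩
  · intro i j
    fin_cases i <;> fin_cases j
    · refine ⟨p, ?_⟩
      have h : f a * f g = f Δ * f p := by rw [← map_mul, ← map_mul, hp]
      simp only [Matrix.mul_diagonal, Matrix.cons_val', Matrix.cons_val_zero,
        Matrix.empty_val', Matrix.cons_val_fin_one, Matrix.of_apply, Units.val_mk0, Fin.zero_eta, Fin.mk_one]
      field_simp
      linear_combination h
    · refine ⟨rb, ?_⟩
      have h : f b = f g * f rb := by rw [← map_mul, hrb]
      simp only [Matrix.mul_diagonal, Matrix.cons_val', Matrix.cons_val_zero,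
        Matrix.cons_val_one, Matrix.head_cons, Matrix.empty_val',
        Matrix.cons_val_fin_one, Matrix.of_apply, Units.val_mk0, Fin.zero_eta, Fin.mk_one]
      field_simp
      linear_combination h
    · refine ⟨q, ?_⟩
      have h : f c * f g = f Δ * f q := by rw [← map_mul, ← map_mul, hq]
      simp only [Matrix.mul_diagonal, Matrix.cons_val', Matrix.cons_val_zero,
        Matrix.cons_val_one, Matrix.head_cons, Matrix.empty_val',
        Matrix.cons_val_fin_one, Matrix.of_apply, Units.val_mk0, Fin.zero_eta, Fin.mk_one]
      field_simp
      linear_combination h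
    · refine ⟨rd, ?_⟩
      have h : f d = f g * f rd := by rw [← map_mul, hrd]
      simp only [Matrix.mul_diagonal, Matrix.cons_val', Matrix.cons_val_zero,
        Matrix.cons_val_one, Matrix.head_cons, Matrix.empty_val',
        Matrix.cons_val_fin_one, Matrix.of_apply, Units.val_mk0, Fin.zero_eta, Fin.mk_one]
      field_simp
      linear_combination h
  · have hdetA : Matrix.det !![f a, f b; f c, f d] = f Δ := by
      rw [Matrix.det_fin_two_of, ← map_mul, ← map_mul, ← map_sub]
    rw [Matrix.det_mul, hdetA, Matrix.det_diagonal]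
    simp only [Fin.prod_univ_two, Matrix.cons_val_zero, Matrix.cons_val_one,
      Matrix.head_cons, Units.val_one, map_one, Units.val_mk0]
    field_simp
end

section
/- Let R = ℤ[√10], let K be its fraction field, and let A be the 2×2 matrix over K with entries A = [[3, 4 + √10],[4 − √10, 3]] (via the embedding of R into K). Then there do not exist λ_1, λ_2 ∈ Kˣ such that every entry of A·diag(λ_1, λ_2) lies in the image of R and the determinant of A·diag(λ_1, λ_2) is a unit of R. Equivalently, A cannot be written as B·diag(λ_1, λ_2) with B ∈ GL_2(R) and λ_1, λ_2 ∈ Kˣ. -/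
/-- **A non-standard embedding over `ℤ[√10]`: the matrix `A = [[3, 4+√10],[4-√10, 3]]`
cannot be column-scaled into `GL_2(ℤ[√10])`.**
There are no `λ₁, λ₂ ∈ Kˣ` (with `K` the fraction field of `ℤ[√10]`) such that all entries
of `A·diag(λ₁,λ₂)` lie in the image of `ℤ[√10]` and its determinant is a unit of `ℤ[√10]`. -/
theorem matrix_over_Zsqrt10_not_column_scalable_into_GL2
    {K : Type*} [Field K] [Algebra (ℤ√10) K] [IsFractionRing (ℤ√10) K] :
    ¬ ∃ l₁ l₂ : Kˣ,
      (∀ i j : Fin 2, ∃ r : ℤ√10,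
        ((!![algebraMap (ℤ√10) K 3, algebraMap (ℤ√10) K (4 + Zsqrtd.sqrtd);
             algebraMap (ℤ√10) K (4 - Zsqrtd.sqrtd), algebraMap (ℤ√10) K 3] *
            Matrix.diagonal ![(l₁ : K), (l₂ : K)]) i j) = algebraMap (ℤ√10) K r)
      ∧
      ∃ u : (ℤ√10)ˣ,
        Matrix.det (!![algebraMap (ℤ√10) K 3, algebraMap (ℤ√10) K (4 + Zsqrtd.sqrtd);
             algebraMap (ℤ√10) K (4 - Zsqrtd.sqrtd), algebraMap (ℤ√10) K 3] *
            Matrix.diagonal ![(l₁ : K), (l₂ : K)])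
          = algebraMap (ℤ√10) K (u : ℤ√10) := by
  rintro ⟨l₁, l₂, hent, u, hdet⟩
  have hinj : Function.Injective (algebraMap (ℤ√10) K) := IsFractionRing.injective _ _
  obtain ⟨r00, h00⟩ := hent 0 0
  obtain ⟨r01, h01⟩ := hent 0 1
  obtain ⟨r10, h10⟩ := hent 1 0
  obtain ⟨r11, h11⟩ := hent 1 1
  simp only [Matrix.mul_diagonal, Matrix.det_fin_two, Matrix.vecMul_diagonal,
    Matrix.cons_val', Matrix.cons_val_zero, Matrix.cons_val_one, Matrix.head_cons,
    Matrix.empty_val', Matrix.cons_val_fin_one, Matrix.head_fin_const, map_add, map_sub,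
    Matrix.of_apply] at h00 h01 h10 h11 hdet
  set f := algebraMap (ℤ√10) K with hf
  have hm3 : f 3 = 3 := map_ofNat _ 3
  have hm4 : f 4 = 4 := map_ofNat _ 4
  have hss : f Zsqrtd.sqrtd * f Zsqrtd.sqrtd = 10 := by
    rw [← map_mul, Zsqrtd.dmuld, map_intCast]
    norm_num
  rw [hm3, hm4] at hdet
  -- the determinant relation: 3·l₁·l₂ = f u
  have hl : (3 : K) * ((l₁ : K) * (l₂ : K)) = f (u : ℤ√10) := by
    linear_combination hdet - (l₁ : K) * (l₂ : K) * hss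
  -- relations in ℤ√10
  have e1 : (3 : ℤ√10) * r10 = (4 - Zsqrtd.sqrtd) * r00 := by
    apply hinj
    rw [map_mul, map_mul, map_sub, ← h10, ← h00]
    ring
  have e2 : (3 : ℤ√10) * r01 = (4 + Zsqrtd.sqrtd) * r11 := by
    apply hinj
    rw [map_mul, map_mul, map_add, ← h01, ← h11]
    ring
  have e3 : r00 * r11 = 3 * (u : ℤ√10) := by
    apply hinj
    rw [map_mul, map_mul, ← h00, ← h11, hm3]
    linear_combination (3 : K) * hl
  -- pass to norms in ℤ
  have n3 : Zsqrtd.norm (3 : ℤ√10) = 9 := by decide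
  have nm : Zsqrtd.norm (4 - Zsqrtd.sqrtd : ℤ√10) = 6 := by decide
  have np : Zsqrtd.norm (4 + Zsqrtd.sqrtd : ℤ√10) = 6 := by decide
  have hn1 : 9 * Zsqrtd.norm r10 = 6 * Zsqrtd.norm r00 := by
    have := congrArg Zsqrtd.norm e1
    rwa [Zsqrtd.norm_mul, Zsqrtd.norm_mul, n3, nm] at this
  have hn2 : 9 * Zsqrtd.norm r01 = 6 * Zsqrtd.norm r11 := by
    have := congrArg Zsqrtd.norm e2
    rwa [Zsqrtd.norm_mul, Zsqrtd.norm_mul, n3, np] at this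
  have hn3 : Zsqrtd.norm r00 * Zsqrtd.norm r11 = 9 * Zsqrtd.norm (u : ℤ√10) := by
    have := congrArg Zsqrtd.norm e3
    rwa [Zsqrtd.norm_mul, Zsqrtd.norm_mul, n3] at this
  have hu : Zsqrtd.norm (u : ℤ√10) = 1 ∨ Zsqrtd.norm (u : ℤ√10) = -1 :=
    Int.isUnit_iff.mp (u.isUnit.map Zsqrtd.normMonoidHom)
  obtain ⟨a, ha⟩ : (3 : ℤ) ∣ Zsqrtd.norm r00 := by omega
  obtain ⟨b, hb⟩ : (3 : ℤ) ∣ Zsqrtd.norm r11 := by omega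
  have hab : a * b = 1 ∨ a * b = -1 := by
    rcases hu with hu | hu <;> rw [ha, hb, hu] at hn3
    · left
      have h9 : (9 : ℤ) * (a * b) = 9 * 1 := by linear_combination hn3
      exact mul_left_cancel₀ (by norm_num) h9
    · right
      have h9 : (9 : ℤ) * (a * b) = 9 * (-1) := by linear_combination hn3
      exact mul_left_cancel₀ (by norm_num) h9
  have ha1 : a = 1 ∨ a = -1 := by
    rcases hab with hab | hab
    · exact Int.isUnit_iff.mp (IsUnit.of_mul_eq_one (a := a) b hab)
    · exact Int.isUnit_iff.mp (IsUnit.of_mul_eq_one (a := a) (-b) (by rw [mul_neg, hab, neg_neg]))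
  have hval : Zsqrtd.norm r00 = 3 ∨ Zsqrtd.norm r00 = -3 := by omega
  have hdefn : r00.re * r00.re - 10 * r00.im * r00.im = Zsqrtd.norm r00 :=
    (Zsqrtd.norm_def r00).symm
  have key : ∀ t w : ZMod 5, ¬(t * t - 10 * w * w = 3) ∧ ¬(t * t - 10 * w * w = -3) := by
    decide
  rcases hval with hv | hv <;> rw [hv] at hdefn <;>
    have hcast := congrArg (Int.cast : ℤ → ZMod 5) hdefn <;> push_cast at hcast
  · exact (key r00.re r00.im).1 hcast
  · exact (key r00.re r00.im).2 hcast
end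

section
/- Let R = ℤ[√10], α = 4 + √10, ᾱ = 4 − √10, and let A = [[3, α],[ᾱ, 3]] ∈ M_2(R). Then: (1) the elements 3, α, ᾱ generate the unit ideal of R; (2) the image of A in M_2(R[1/3]) is invertible (its determinant 3 is a unit there); (3) in the localization R[1/α], the element ᾱ/3 = 2/α lies in R[1/α], and the matrix A·diag(1/3, 1) has all entries in R[1/α] and determinant 1; (4) symmetrically, in R[1/ᾱ] the matrix A·diag(1, 1/3) has all entries in R[1/ᾱ] and determinant 1. In particular, A·diag(λ_1,λ_2) lies in GL_2 of each of the three localizations R[1/3], R[1/α], R[1/ᾱ] for suitable λ_1, λ_2, and these three localizations cover Spec R. -/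
/-- **Zariski-local triviality of the non-standard embedding over `ℤ[√10]`.**
With `R = ℤ[√10]`, `α = 4 + √10`, `ᾱ = 4 - √10` and `A = [[3, α],[ᾱ, 3]]`:
(1) `3, α, ᾱ` generate the unit ideal of `R`;
(2) the image of `A` in `M_2(R[1/3])` is invertible, with determinant (the image of) `3`,
a unit there;
(3) in `R[1/α]` the element `c = ᾱ/3 = 2/α` exists, and `A·diag(1/3,1)` (i.e. the matrix `B`
with `B·diag(3,1) = A`) has all entries in `R[1/α]` and determinant `1`;
(4) symmetrically, in `R[1/ᾱ]` the matrix `A·diag(1,1/3)` has all entries in `R[1/ᾱ]` and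
determinant `1`. -/
theorem nonstandard_embedding_is_Zariski_locally_standard
    (α β : ℤ√10) (hα : α = 4 + Zsqrtd.sqrtd) (hβ : β = 4 - Zsqrtd.sqrtd) :
    (Ideal.span ({3, α, β} : Set (ℤ√10)) = ⊤)
    ∧
    (IsUnit ((!![(3 : ℤ√10), α; β, 3]).map
        (algebraMap (ℤ√10) (Localization.Away (3 : ℤ√10))))
      ∧ ((!![(3 : ℤ√10), α; β, 3]).map
            (algebraMap (ℤ√10) (Localization.Away (3 : ℤ√10)))).det
          = algebraMap (ℤ√10) (Localization.Away (3 : ℤ√10)) 3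
      ∧ IsUnit (algebraMap (ℤ√10) (Localization.Away (3 : ℤ√10)) 3))
    ∧
    ((∃ c : Localization.Away α,
        c * algebraMap (ℤ√10) (Localization.Away α) 3
            = algebraMap (ℤ√10) (Localization.Away α) β
        ∧ c * algebraMap (ℤ√10) (Localization.Away α) α
            = algebraMap (ℤ√10) (Localization.Away α) 2)
      ∧ ∃ B : Matrix (Fin 2) (Fin 2) (Localization.Away α),
          B * Matrix.diagonal ![algebraMap (ℤ√10) (Localization.Away α) 3, 1]
              = (!![(3 : ℤ√10), α; β, 3]).map (algebraMap (ℤ√10) (Localization.Away α))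
          ∧ B.det = 1)
    ∧
    (∃ B : Matrix (Fin 2) (Fin 2) (Localization.Away β),
        B * Matrix.diagonal ![1, algebraMap (ℤ√10) (Localization.Away β) 3]
            = (!![(3 : ℤ√10), α; β, 3]).map (algebraMap (ℤ√10) (Localization.Away β))
        ∧ B.det = 1) := by

  have hab : α * β = 6 := by subst hα hβ; decide
  have hsum : (1:ℤ√10) = 3 * 3 - α - β := by subst hα hβ; decide
  refine ⟨?_, ?_, ⟨?_, ?_⟩, ?_⟩
  · rw [Ideal.eq_top_iff_one, hsum]
    exact sub_mem (sub_mem (Ideal.mul_mem_left _ _ (Ideal.subset_span (by simp)))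
      (Ideal.subset_span (by simp))) (Ideal.subset_span (by simp))
  · -- part 2
    set f := algebraMap (ℤ√10) (Localization.Away (3 : ℤ√10)) with hf
    have hdet : ((!![(3 : ℤ√10), α; β, 3]).map f).det = f 3 := by
      rw [← RingHom.mapMatrix_apply, ← RingHom.map_det]
      congr 1
      rw [Matrix.det_fin_two_of, hab]; ring
    have hu : IsUnit (f 3) := by
      refine IsUnit.of_mul_eq_one (IsLocalization.Away.invSelf (3:ℤ√10)) ?_
      exact IsLocalization.Away.mul_invSelf (3:ℤ√10)
    exact ⟨(Matrix.isUnit_iff_isUnit_det _).2 (hdet ▸ hu), hdet, hu⟩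
  · -- part 3a
    set g := algebraMap (ℤ√10) (Localization.Away α) with hg
    set u := IsLocalization.Away.invSelf (S := Localization.Away α) α with hu
    have h1 : g α * u = 1 := IsLocalization.Away.mul_invSelf α
    refine ⟨2 * u, ?_, ?_⟩
    · have : g α * (2 * u * g 3) = g α * g β := by
        rw [← map_mul, hab]
        calc g α * (2 * u * g 3) = (g α * u) * (2 * g 3) := by ring
        _ = 2 * g 3 := by rw [h1, one_mul]
        _ = g 6 := by simp only [show (6:ℤ√10) = 2 * 3 by norm_num, map_mul, map_ofNat]
      have h2 : 2 * u * g 3 = (g α * u) * (2 * u * g 3) * 1 := by rw [h1]; ring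
      calc 2 * u * g 3 = u * (g α * (2 * u * g 3)) := by
            rw [show u * (g α * (2 * u * g 3)) = (g α * u) * (2 * u * g 3) by ring, h1, one_mul]
        _ = u * (g α * g β) := by rw [this]
        _ = (g α * u) * g β := by ring
        _ = g β := by rw [h1, one_mul]
    · calc 2 * u * g α = 2 * (g α * u) := by ring
        _ = g 2 := by rw [h1, map_ofNat, mul_one]
  · -- part 3b
    set g := algebraMap (ℤ√10) (Localization.Away α) with hg
    set u := IsLocalization.Away.invSelf (S := Localization.Away α) α with hu
    have h1 : g α * u = 1 := IsLocalization.Away.mul_invSelf α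
    have hc3 : (2 * u) * g 3 = g β := by
      calc (2 * u) * g 3 = u * g (2 * 3) := by simp only [map_mul, map_ofNat g 2]; ring
        _ = u * g (α * β) := by norm_num [hab]
        _ = (g α * u) * g β := by rw [map_mul]; ring
        _ = g β := by rw [h1, one_mul]
    refine ⟨!![1, g α; 2 * u, g 3], ?_, ?_⟩
    · ext i j
      fin_cases i <;> fin_cases j <;>
        simp [Matrix.mul_diagonal, hc3]
    · rw [Matrix.det_fin_two_of]
      have : g α * (2 * u) = g 2 := by
        calc g α * (2 * u) = 2 * (g α * u) := by ring
          _ = g 2 := by rw [h1, map_ofNat, mul_one]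
      rw [this, ← map_one g, ← map_mul, ← map_sub]
      norm_num
  · -- part 4
    set g := algebraMap (ℤ√10) (Localization.Away β) with hg
    set u := IsLocalization.Away.invSelf (S := Localization.Away β) β with hu
    have h1 : g β * u = 1 := IsLocalization.Away.mul_invSelf β
    have hc3 : (2 * u) * g 3 = g α := by
      calc (2 * u) * g 3 = u * g (2 * 3) := by simp only [map_mul, map_ofNat g 2]; ring
        _ = u * g (α * β) := by norm_num [hab]
        _ = (g β * u) * g α := by rw [map_mul]; ring
        _ = g α := by rw [h1, one_mul]
    refine ⟨!![g 3, 2 * u; g β, 1], ?_, ?_⟩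
    · ext i j
      fin_cases i <;> fin_cases j <;>
        simp [Matrix.mul_diagonal, hc3]
    · rw [Matrix.det_fin_two_of]
      have : 2 * u * g β = g 2 := by
        calc 2 * u * g β = 2 * (g β * u) := by ring
          _ = g 2 := by rw [h1, map_ofNat, mul_one]
      rw [mul_one, this, ← map_one g, ← map_sub]
      norm_num
end

section
/- Let R be a Dedekind domain that is not a field, let r ≥ 1, and let I_1, …, I_r and J_1, …, J_r be nonzero ideals of R. Then the R-modules I_1 ⊕ … ⊕ I_r and J_1 ⊕ … ⊕ J_r are isomorphic if and only if the products I_1⋯I_r and J_1⋯J_r have the same class in the ideal class group of R. In particular, I_1 ⊕ … ⊕ I_r is a free R-module of rank r if and only if the product ideal I_1⋯I_r is principal. -/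
set_option linter.unusedSectionVars false
set_option maxHeartbeats 1000000

open Ideal UniqueFactorizationMonoid

namespace SteinitzAux

section A
variable {R : Type*} [CommRing R] [IsDomain R]


/-- Multiplication by a nonzero element gives `I ≃ₗ[R] aI`. -/
noncomputable def idealMulEquiv {a : R} (ha : a ≠ 0) (I : Ideal R) :
    ↥I ≃ₗ[R] ↥(Ideal.span {a} * I) := by
  refine LinearEquiv.ofBijective
    { toFun := fun x => ⟨a * x, Ideal.mul_mem_mul (Ideal.mem_span_singleton_self a) x.2⟩
      map_add' := by intro x y; apply Subtype.ext; simp [mul_add]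
      map_smul' := by intro r x; apply Subtype.ext; simp [Submodule.coe_smul]; ring } ?_
  constructor
  · intro x y h
    apply Subtype.ext
    have : a * (x : R) = a * (y : R) := congrArg Subtype.val h
    exact mul_left_cancel₀ ha this
  · rintro ⟨z, hz⟩
    obtain ⟨y, hy, rfl⟩ := Ideal.mem_span_singleton_mul.mp hz
    exact ⟨⟨y, hy⟩, rfl⟩

theorem iso_of_span_mul_eq {I J : Ideal R} {a b : R} (ha : a ≠ 0) (hb : b ≠ 0)
    (h : Ideal.span {a} * I = Ideal.span {b} * J) :
    Nonempty (↥I ≃ₗ[R] ↥J) :=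
  ⟨(idealMulEquiv ha I).trans ((LinearEquiv.ofEq _ _ h).trans (idealMulEquiv hb J).symm)⟩

end A

section B
variable {R : Type*} [CommRing R]


theorem coprimePairIso {I J : Ideal R} (h : I ⊔ J = ⊤) :
    Nonempty ((↥I × ↥J) ≃ₗ[R] (R × ↥(I * J))) := by
  have h1 : (1 : R) ∈ I ⊔ J := h ▸ Submodule.mem_top
  obtain ⟨i, hi, j, hj, hij⟩ := Submodule.mem_sup.mp h1
  refine ⟨LinearEquiv.ofLinear
    { toFun := fun p => (↑p.1 - ↑p.2, ⟨j * ↑p.1 + i * ↑p.2,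
        add_mem (mul_comm j (p.1 : R) ▸ Ideal.mul_mem_mul p.1.2 hj)
          (Ideal.mul_mem_mul hi p.2.2)⟩)
      map_add' := by intro x y; refine Prod.ext ?_ (Subtype.ext ?_) <;> simp <;> ring
      map_smul' := by intro r x; refine Prod.ext ?_ (Subtype.ext ?_) <;> simp [smul_eq_mul] <;> ring }
    { toFun := fun p => (⟨i * p.1 + ↑p.2, add_mem (Ideal.mul_mem_right _ _ hi)
          (Ideal.mul_le_left p.2.2)⟩,
        ⟨-(j * p.1) + ↑p.2, add_mem (neg_mem (Ideal.mul_mem_right _ _ hj))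
          (Ideal.mul_le_right p.2.2)⟩)
      map_add' := by intro x y; refine Prod.ext (Subtype.ext ?_) (Subtype.ext ?_) <;> simp <;> ring
      map_smul' := by intro r x; refine Prod.ext (Subtype.ext ?_) (Subtype.ext ?_) <;>
        simp [smul_eq_mul] <;> ring }
    ?_ ?_⟩
  all_goals ext p <;> simp <;>
    first
      | linear_combination hij
      | linear_combination (p : R) * hij
      | ring

end B

section C
variable {R : Type*} [CommRing R] [IsDedekindDomain R]


theorem exists_mul_span_coprime {I J : Ideal R} (hI : I ≠ ⊥) (hJ : J ≠ ⊥) :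
    ∃ (a : R) (C : Ideal R), a ≠ 0 ∧ I * C = Ideal.span {a} ∧ IsCoprime C J := by
  classical
  have hI0 : I ≠ 0 := hI
  have hJ0 : J ≠ 0 := hJ
  by_cases hJtop : J = ⊤
  · obtain ⟨a, haI, ha⟩ := Submodule.exists_mem_ne_zero_of_ne_bot hI
    obtain ⟨C, hC⟩ := Ideal.dvd_iff_le.mpr
      ((Ideal.span_singleton_le_iff_mem I).mpr haI)
    exact ⟨a, C, ha, hC.symm, by rw [hJtop, ← Ideal.one_eq_top]; exact isCoprime_one_right⟩
  -- main case
  have hIJ0 : I * J ≠ 0 := mul_ne_zero hI0 hJ0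
  set S : Finset (Ideal R) := (normalizedFactors (I * J)).toFinset with hS
  have hmemS : ∀ {P : Ideal R}, P ∈ S ↔ P ∈ normalizedFactors (I * J) :=
    fun {P} => Multiset.mem_toFinset
  have hprime : ∀ P ∈ S, Prime P := fun P hP => prime_of_normalized_factor P (hmemS.mp hP)
  set n : Ideal R → ℕ := fun P => (normalizedFactors I).count P with hn
  have hxP : ∀ P ∈ S, ∃ x ∈ P ^ (n P), x ∉ P ^ (n P + 1) := fun P hP =>
    Ideal.exists_mem_pow_notMem_pow_succ P
      (by simpa [Ideal.zero_eq_bot] using (hprime P hP).ne_zero)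
      (by simpa [Ideal.isUnit_iff] using (hprime P hP).not_unit) (n P)
  choose x hx1 hx2 using hxP
  obtain ⟨y, hy⟩ := IsDedekindDomain.exists_forall_sub_mem_ideal (s := S) id (fun P => n P + 1)
    (fun P hP => hprime P hP) (fun P _ Q _ h => h) (fun P => x P.1 P.2)
  simp only [id_eq] at hy
  have hymem : ∀ P ∈ S, y ∈ P ^ (n P) := by
    intro P hP
    have h1 : y - x P hP ∈ P ^ (n P) :=
      Ideal.pow_le_pow_right (Nat.le_succ _) (hy P hP)
    simpa using add_mem h1 (hx1 P hP)
  have hynot : ∀ P ∈ S, y ∉ P ^ (n P + 1) := by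
    intro P hP hcon
    exact hx2 P hP (by simpa using sub_mem hcon (hy P hP))
  -- a prime factor of J, to show y ≠ 0, and later reuse
  have hfacJ : ∀ {P : Ideal R}, P.IsPrime → J ≤ P → P ∈ S := by
    intro P hPp hle
    have hP0 : P ≠ ⊥ := fun h => hJ (le_bot_iff.mp (h ▸ hle))
    have hprime' : Prime P := Ideal.prime_of_isPrime hP0 hPp
    obtain ⟨Q, hQ, hassoc⟩ := exists_mem_normalizedFactors_of_dvd hIJ0 hprime'.irreducible
      ((Ideal.dvd_iff_le.mpr hle).trans (dvd_mul_left J I))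
    rw [hmemS, associated_iff_eq.mp hassoc]; exact hQ
  have hy0 : y ≠ 0 := by
    obtain ⟨M, hM, hJM⟩ := Ideal.exists_le_maximal J hJtop
    have hMS : M ∈ S := hfacJ hM.isPrime hJM
    intro h
    exact hynot M hMS (h ▸ zero_mem _)
  -- y ∈ I
  have hyI : I ∣ Ideal.span {y} := by
    rw [dvd_iff_normalizedFactors_le_normalizedFactors hI0
      (by simpa [Ideal.zero_eq_bot, Ideal.span_singleton_eq_bot] using hy0),
      Multiset.le_iff_count]
    intro P
    by_cases hPI : P ∈ normalizedFactors I
    · have hPS : P ∈ S := by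
        rw [hmemS, normalizedFactors_mul hI0 hJ0]
        exact Multiset.mem_add.mpr (Or.inl hPI)
      have hdvd : P ^ (n P) ∣ Ideal.span {y} :=
        Ideal.dvd_iff_le.mpr ((Ideal.span_singleton_le_iff_mem _).mpr (hymem P hPS))
      have hP0 : P ^ (n P) ≠ 0 := pow_ne_zero _ (hprime P hPS).ne_zero
      have := (dvd_iff_normalizedFactors_le_normalizedFactors hP0
        (by simpa [Ideal.zero_eq_bot, Ideal.span_singleton_eq_bot] using hy0)).mp hdvd
      have hnf : normalizedFactors (P ^ (n P)) = (n P) • {P} := by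
        rw [normalizedFactors_pow, normalizedFactors_irreducible (hprime P hPS).irreducible,
          normalize_normalized_factor P hPI]
      rw [hnf, Multiset.le_iff_count] at this
      have := this P
      simpa [Multiset.count_nsmul, hn] using this
    · simp [Multiset.count_eq_zero.mpr hPI]
  obtain ⟨C, hC⟩ := hyI
  refine ⟨y, C, hy0, hC.symm, ?_⟩
  apply Ideal.coprime_of_no_prime_ge
  intro P hCP hJP hPp
  have hPS : P ∈ S := hfacJ hPp hJP
  -- I ≤ P ^ (n P)
  have hIle : I ≤ P ^ (n P) := by
    apply Ideal.le_of_dvd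
    rw [dvd_iff_normalizedFactors_le_normalizedFactors
      (pow_ne_zero _ (hprime P hPS).ne_zero) hI0]
    have hnf : normalizedFactors (P ^ (n P)) = (n P) • {P} := by
      rw [normalizedFactors_pow, normalizedFactors_irreducible (hprime P hPS).irreducible,
        normalize_eq P]
    rw [hnf, Multiset.le_iff_count]
    intro Q
    rcases eq_or_ne Q P with rfl | hQP
    · simp [Multiset.count_nsmul, hn]
    · simp [Multiset.count_nsmul, Multiset.count_singleton, hQP]
  have : Ideal.span {y} ≤ P ^ (n P + 1) := by
    rw [hC, pow_succ]
    exact Ideal.mul_mono hIle hCP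
  exact hynot P hPS (this (Ideal.mem_span_singleton_self y))

end C

section D
variable {R : Type*} [CommRing R]


theorem prod_mul_mem {K : Type*} [CommRing K] [Algebra R K] {ι : Type*} (s : Finset ι)
    (M N : ι → Submodule R K) (c : ι → K)
    (h : ∀ i ∈ s, ∀ x ∈ M i, c i * x ∈ N i) :
    ∀ x ∈ ∏ i ∈ s, M i, (∏ i ∈ s, c i) * x ∈ ∏ i ∈ s, N i := by
  classical
  induction s using Finset.induction_on with
  | empty => intro x hx; simpa using hx
  | insert a s ha ih =>
    intro z hz
    rw [Finset.prod_insert ha] at hz ⊢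
    rw [Finset.prod_insert ha]
    refine Submodule.mul_induction_on hz (fun m hm p hp => ?_) (fun y₁ y₂ h₁ h₂ => ?_)
    · have : (c a * ∏ i ∈ s, c i) * (m * p) = (c a * m) * ((∏ i ∈ s, c i) * p) := by ring
      rw [this]
      exact Submodule.mul_mem_mul (h a (Finset.mem_insert_self a s) m hm)
        (ih (fun i hi => h i (Finset.mem_insert_of_mem hi)) p hp)
    · rw [mul_add]
      exact add_mem h₁ h₂

theorem map_ideal_prod {K : Type*} [CommRing K] [Algebra R K] {ι : Type*} (s : Finset ι)
    (I : ι → Ideal R) :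
    Submodule.map (Algebra.ofId R K).toLinearMap (∏ i ∈ s, I i) =
      ∏ i ∈ s, Submodule.map (Algebra.ofId R K).toLinearMap (I i) := by
  classical
  induction s using Finset.induction_on with
  | empty => simpa using Submodule.map_one (Algebra.ofId R K)
  | insert a s ha ih =>
    rw [Finset.prod_insert ha, Finset.prod_insert ha, Submodule.map_mul, ih]

end D

section E
variable {R : Type*} [CommRing R] [IsDomain R]


/-- Any linear map between products of ideals is represented by a matrix over the
fraction field. -/
theorem matrix_rep {r : ℕ} (I J : Fin r → Ideal R)
    (x : Fin r → R) (hxmem : ∀ i, x i ∈ I i) (hx0 : ∀ i, x i ≠ 0)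
    (f : ((i : Fin r) → ↥(I i)) →ₗ[R] ((i : Fin r) → ↥(J i))) :
    ∃ A : Matrix (Fin r) (Fin r) (FractionRing R),
      ∀ (m : (i : Fin r) → ↥(I i)) (i : Fin r),
        algebraMap R (FractionRing R) ↑(f m i) = ∑ j, A i j * algebraMap R (FractionRing R) ↑(m j) := by
  classical
  set K := FractionRing R
  have hinj : Function.Injective (algebraMap R K) := IsFractionRing.injective R K
  have halg0 : ∀ c : R, c ≠ 0 → algebraMap R K c ≠ 0 := fun c hc =>
    fun h => hc (hinj (by simpa using h))
  set A : Matrix (Fin r) (Fin r) K := fun i j =>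
    algebraMap R K ↑(f (Pi.single j ⟨x j, hxmem j⟩) i) / algebraMap R K (x j) with hA
  refine ⟨A, ?_⟩
  have key : ∀ (j : Fin r) (u : ↥(I j)) (i : Fin r),
      algebraMap R K ↑(f (Pi.single j u) i) = A i j * algebraMap R K ↑u := by
    intro j u i
    set xj : ↥(I j) := ⟨x j, hxmem j⟩ with hxj
    have hsmul : (x j) • (Pi.single j u : (i : Fin r) → ↥(I i)) =
        (u : R) • (Pi.single j xj : (i : Fin r) → ↥(I i)) := by
      funext i'
      rcases eq_or_ne i' j with rfl | h
      · simp only [Pi.smul_apply, Pi.single_eq_same]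
        exact Subtype.ext (mul_comm _ _)
      · simp [Pi.single_eq_of_ne h]
    have h2 : (x j) • f (Pi.single j u) = (u : R) • f (Pi.single j xj) := by
      rw [← map_smul, ← map_smul, hsmul]
    have hR : x j * ↑(f (Pi.single j u) i) = (u : R) * ↑(f (Pi.single j xj) i) := by
      have h3 := congrArg Subtype.val (congrFun h2 i)
      simpa [Pi.smul_apply, Submodule.coe_smul, smul_eq_mul] using h3
    have hK := congrArg (algebraMap R K) hR
    rw [_root_.map_mul, _root_.map_mul] at hK
    rw [hA]
    simp only []
    rw [div_mul_eq_mul_div, eq_div_iff (halg0 (x j) (hx0 j))]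
    rw [hxj] at hK
    linear_combination hK
  intro m i
  have hfm : f m = ∑ j, f (Pi.single j (m j)) := by
    rw [← map_sum, Finset.univ_sum_single]
  calc algebraMap R K ↑(f m i)
      = algebraMap R K ↑((∑ j, f (Pi.single j (m j))) i) := by rw [hfm]
    _ = ∑ j, algebraMap R K ↑(f (Pi.single j (m j)) i) := by
        rw [Finset.sum_apply, AddSubmonoidClass.coe_finset_sum, map_sum]
    _ = ∑ j, A i j * algebraMap R K ↑(m j) :=
        Finset.sum_congr rfl fun j _ => key j (m j) i


theorem exists_span_mul_eq_of_pi_iso {r : ℕ} (I J : Fin r → Ideal R)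
    (hI : ∀ i, I i ≠ ⊥) (hJ : ∀ i, J i ≠ ⊥)
    (e : ((i : Fin r) → ↥(I i)) ≃ₗ[R] ((i : Fin r) → ↥(J i))) :
    ∃ a b : R, a ≠ 0 ∧ b ≠ 0 ∧ Ideal.span {a} * (∏ i, I i) = Ideal.span {b} * (∏ i, J i) := by
  classical
  set K := FractionRing R with hK
  have hinj : Function.Injective (algebraMap R K) := IsFractionRing.injective R K
  have halg0 : ∀ c : R, c ≠ 0 → algebraMap R K c ≠ 0 := fun c hc h =>
    hc (hinj (by simpa using h))
  choose x hxmem hx0 using fun i => Submodule.exists_mem_ne_zero_of_ne_bot (hI i)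
  choose y hymem hy0 using fun i => Submodule.exists_mem_ne_zero_of_ne_bot (hJ i)
  obtain ⟨A, hA⟩ := matrix_rep I J x hxmem hx0 e.toLinearMap
  obtain ⟨B, hB⟩ := matrix_rep J I y hymem hy0 e.symm.toLinearMap
  simp only [LinearEquiv.coe_coe] at hA hB
  -- the composite matrix acts as the identity on vectors coming from `Π I i`
  have mv : ∀ (M : Matrix (Fin r) (Fin r) K) (v : Fin r → K) (i : Fin r),
      M.mulVec v i = ∑ j, M i j * v j := fun M v i => by
    simp [Matrix.mulVec, dotProduct]
  have hact : ∀ (mm : (i : Fin r) → ↥(I i)) (i : Fin r),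
      algebraMap R K ↑(mm i) = ((B * A).mulVec (fun j => algebraMap R K ↑(mm j))) i := by
    intro mm i
    have h1 := hB (e mm) i
    rw [LinearEquiv.symm_apply_apply] at h1
    rw [← Matrix.mulVec_mulVec, mv, h1]
    exact Finset.sum_congr rfl fun j _ => by rw [hA mm j, mv]
  have hBA : B * A = 1 := by
    ext i k
    have hv : (fun j => algebraMap R K ↑((Pi.single k ⟨x k, hxmem k⟩ : (i : Fin r) → ↥(I i)) j))
        = algebraMap R K (x k) • Pi.single k (1 : K) := by
      funext j
      rcases eq_or_ne j k with rfl | h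
      · simp
      · simp [Pi.single_eq_of_ne h]
    have h2 : (B * A).mulVec (algebraMap R K (x k) • Pi.single k (1 : K))
        = algebraMap R K (x k) • Pi.single k (1 : K) := by
      rw [← hv]
      exact funext fun i' => (hact (Pi.single k ⟨x k, hxmem k⟩) i').symm
    rw [Matrix.mulVec_smul] at h2
    have h3 : (B * A).mulVec (Pi.single k (1 : K)) = Pi.single k (1 : K) :=
      smul_right_injective _ (halg0 (x k) (hx0 k)) h2
    have h4 := congrFun h3 i
    rw [Matrix.mulVec_single] at h4
    simp only [Pi.smul_apply, Matrix.col_apply, MulOpposite.op_one, one_smul] at h4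
    rw [h4, Matrix.one_apply, Pi.single_apply]
  have hdet : B.det * A.det = 1 := by rw [← Matrix.det_mul, hBA, Matrix.det_one]
  set F := (Algebra.ofId R K).toLinearMap with hF
  have hFapp : ∀ c : R, F c = algebraMap R K c := fun c => rfl
  -- matrix entries multiply the ideals into each other
  have hAmem : ∀ i j, ∀ w ∈ Submodule.map F (I j : Ideal R),
      A i j * w ∈ Submodule.map F (J i : Ideal R) := by
    rintro i j w ⟨u, hu, rfl⟩
    have h5 := hA (Pi.single j ⟨u, hu⟩) i
    have h6 : ∑ k, A i k * algebraMap R K ↑((Pi.single j (⟨u, hu⟩ : ↥(I j)) :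
        (i : Fin r) → ↥(I i)) k) = A i j * algebraMap R K u := by
      have h7 := Fintype.sum_eq_single (f := fun k => A i k * algebraMap R K
        ↑((Pi.single j (⟨u, hu⟩ : ↥(I j)) : (i : Fin r) → ↥(I i)) k)) j
        (fun k hk => by simp [Pi.single_eq_of_ne hk])
      rw [h7]; simp
    rw [h6] at h5
    refine ⟨_, (e (Pi.single j ⟨u, hu⟩) i).2, ?_⟩
    simp only [hFapp]
    exact h5
  have hBmem : ∀ i j, ∀ w ∈ Submodule.map F (J j : Ideal R),
      B i j * w ∈ Submodule.map F (I i : Ideal R) := by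
    rintro i j w ⟨u, hu, rfl⟩
    have h5 := hB (Pi.single j ⟨u, hu⟩) i
    have h6 : ∑ k, B i k * algebraMap R K ↑((Pi.single j (⟨u, hu⟩ : ↥(J j)) :
        (i : Fin r) → ↥(J i)) k) = B i j * algebraMap R K u := by
      have h7 := Fintype.sum_eq_single (f := fun k => B i k * algebraMap R K
        ↑((Pi.single j (⟨u, hu⟩ : ↥(J j)) : (i : Fin r) → ↥(J i)) k)) j
        (fun k hk => by simp [Pi.single_eq_of_ne hk])
      rw [h7]; simp
    rw [h6] at h5
    refine ⟨_, (e.symm (Pi.single j ⟨u, hu⟩) i).2, ?_⟩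
    simp only [hFapp]
    exact h5
  -- determinant moves the product ideals into each other
  have hdmem : ∀ (M N : Fin r → Ideal R) (C : Matrix (Fin r) (Fin r) K),
      (∀ i j, ∀ w ∈ Submodule.map F (M j : Ideal R), C i j * w ∈ Submodule.map F (N i : Ideal R)) →
      ∀ z ∈ ∏ i, Submodule.map F (M i : Ideal R),
        C.det * z ∈ ∏ i, Submodule.map F (N i : Ideal R) := by
    intro M N C hC z hz
    rw [Matrix.det_apply, Finset.sum_mul]
    refine Submodule.sum_mem _ fun σ _ => ?_
    rw [smul_mul_assoc, Units.smul_def]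
    refine zsmul_mem ?_ _
    have h7 := prod_mul_mem Finset.univ (fun i => Submodule.map F (M i : Ideal R))
      (fun i => Submodule.map F (N (σ i) : Ideal R)) (fun i => C (σ i) i)
      (fun i _ w hw => hC (σ i) i w hw) z hz
    exact (Equiv.prod_comp σ (fun i => Submodule.map F (N i : Ideal R))) ▸ h7
  have hsub1 : Submodule.span R {A.det} * (∏ i, Submodule.map F (I i : Ideal R)) ≤
      ∏ i, Submodule.map F (J i : Ideal R) := by
    rw [Submodule.mul_le]
    intro m hm z hz
    obtain ⟨t, rfl⟩ := Submodule.mem_span_singleton.mp hm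
    rw [smul_mul_assoc]
    exact Submodule.smul_mem _ t (hdmem I J A hAmem z hz)
  have hsub2 : Submodule.span R {B.det} * (∏ i, Submodule.map F (J i : Ideal R)) ≤
      ∏ i, Submodule.map F (I i : Ideal R) := by
    rw [Submodule.mul_le]
    intro m hm z hz
    obtain ⟨t, rfl⟩ := Submodule.mem_span_singleton.mp hm
    rw [smul_mul_assoc]
    exact Submodule.smul_mem _ t (hdmem J I B hBmem z hz)
  have heq : Submodule.span R {A.det} * (∏ i, Submodule.map F (I i : Ideal R)) =
      ∏ i, Submodule.map F (J i : Ideal R) := by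
    refine le_antisymm hsub1 ?_
    have h1 : (1 : Submodule R K) = Submodule.span R {A.det} * Submodule.span R {B.det} := by
      rw [Submodule.span_mul_span, Set.singleton_mul_singleton, Submodule.one_eq_span]
      have hmc : A.det * B.det = 1 := by rw [mul_comm]; exact hdet
      rw [hmc]
    calc (∏ i, Submodule.map F (J i : Ideal R))
        = 1 * ∏ i, Submodule.map F (J i : Ideal R) := (one_mul _).symm
      _ = Submodule.span R {A.det} * (Submodule.span R {B.det} *
            ∏ i, Submodule.map F (J i : Ideal R)) := by rw [h1, mul_assoc]
      _ ≤ Submodule.span R {A.det} * ∏ i, Submodule.map F (I i : Ideal R) :=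
            mul_le_mul' (le_refl _) hsub2
  -- write the determinant as a fraction
  obtain ⟨b0, a0, ha0mem, hdiv⟩ := IsFractionRing.div_surjective (A := R) A.det
  have ha0 : a0 ≠ 0 := nonZeroDivisors.ne_zero ha0mem
  have hdetne : A.det ≠ 0 := by
    have hne : B.det * A.det ≠ 0 := by rw [hdet]; exact one_ne_zero
    exact right_ne_zero_of_mul hne
  have hb0 : b0 ≠ 0 := by
    rintro rfl
    rw [map_zero, zero_div] at hdiv
    exact hdetne hdiv.symm
  have halgb : algebraMap R K a0 * A.det = algebraMap R K b0 := by
    rw [← hdiv, mul_div_cancel₀ _ (halg0 a0 ha0)]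
  -- final computation
  have hmain : Submodule.map F ((Ideal.span {b0} * ∏ i, I i : Ideal R) : Submodule R R) =
      Submodule.map F ((Ideal.span {a0} * ∏ i, J i : Ideal R) : Submodule R R) := by
    rw [Submodule.map_mul _ _ (Algebra.ofId R K), Submodule.map_mul _ _ (Algebra.ofId R K)]
    rw [map_ideal_prod, map_ideal_prod]
    have hms : ∀ c : R, Submodule.map F (Ideal.span {c} : Submodule R R) =
        Submodule.span R {algebraMap R K c} := by
      intro c
      rw [← Ideal.submodule_span_eq, Submodule.map_span, Set.image_singleton]
      rfl
    rw [hms, hms]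
    calc Submodule.span R {algebraMap R K b0} * ∏ i, Submodule.map F (I i : Ideal R)
        = (Submodule.span R {algebraMap R K a0} * Submodule.span R {A.det}) *
            ∏ i, Submodule.map F (I i : Ideal R) := by
          rw [Submodule.span_mul_span, Set.singleton_mul_singleton, ← halgb]
      _ = Submodule.span R {algebraMap R K a0} * (Submodule.span R {A.det} *
            ∏ i, Submodule.map F (I i : Ideal R)) := by rw [mul_assoc]
      _ = Submodule.span R {algebraMap R K a0} * ∏ i, Submodule.map F (J i : Ideal R) := by
          rw [heq]
  have := Submodule.map_injective_of_injective (f := F) hinj hmain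
  exact ⟨b0, a0, hb0, ha0, this⟩

end E

section P
variable {R : Type*} [Semiring R]


/-- Dependent version of splitting off the first coordinate of a `Fin (n+1)`-indexed product. -/
def piFinSuccLequiv {n : ℕ} (φ : Fin (n + 1) → Type*) [∀ i, AddCommMonoid (φ i)]
    [∀ i, Module R (φ i)] :
    ((i : Fin (n + 1)) → φ i) ≃ₗ[R] φ 0 × ((i : Fin n) → φ i.succ) :=
  LinearEquiv.ofLinear
    (LinearMap.prod (LinearMap.proj 0) (LinearMap.pi fun i => LinearMap.proj i.succ))
    { toFun := fun p => Fin.cons p.1 p.2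
      map_add' := by
        intro p q; funext i
        refine Fin.cases ?_ (fun j => ?_) i <;> simp
      map_smul' := by
        intro r p; funext i
        refine Fin.cases ?_ (fun j => ?_) i <;> simp }
    (by
      apply LinearMap.ext; intro p
      refine Prod.ext ?_ ?_
      · simp
      · funext j; simp)
    (by
      apply LinearMap.ext; intro m
      funext i
      refine Fin.cases ?_ (fun j => ?_) i <;> simp)

/-- `A × (B × C) ≃ B × (A × C)`. -/
def swapLeftLequiv (A B C : Type*) [AddCommMonoid A] [AddCommMonoid B] [AddCommMonoid C]
    [Module R A] [Module R B] [Module R C] : (A × (B × C)) ≃ₗ[R] (B × (A × C)) :=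
  (LinearEquiv.prodAssoc R A B C).symm ≪≫ₗ
    (LinearEquiv.prodCongr (LinearEquiv.prodComm R A B) (LinearEquiv.refl R C)) ≪≫ₗ
    LinearEquiv.prodAssoc R B A C



end P

section F
variable {R : Type*} [CommRing R] [IsDedekindDomain R]


theorem pairIso {I J : Ideal R} (hI : I ≠ ⊥) (hJ : J ≠ ⊥) :
    Nonempty ((↥I × ↥J) ≃ₗ[R] (R × ↥(I * J))) := by
  obtain ⟨a, C, ha, hC, _⟩ := exists_mul_span_coprime hI hJ
  have hC0 : C ≠ ⊥ := by
    rintro rfl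
    rw [Ideal.mul_bot, eq_comm, Ideal.span_singleton_eq_bot] at hC
    exact ha hC
  obtain ⟨b, D, hb, hD, hcopD⟩ := exists_mul_span_coprime hC0 hJ
  have key : Ideal.span {b} * I = Ideal.span {a} * D := by
    calc Ideal.span {b} * I = I * (C * D) := by rw [hD, mul_comm]
    _ = (I * C) * D := by ring
    _ = Ideal.span {a} * D := by rw [hC]
  have hD0 : D ≠ ⊥ := by
    rintro rfl
    rw [Ideal.mul_bot, eq_comm, Ideal.span_singleton_eq_bot] at hD
    exact hb hD
  obtain ⟨e1⟩ := iso_of_span_mul_eq hb ha key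
  obtain ⟨e2⟩ := coprimePairIso (isCoprime_iff_sup_eq.mp hcopD)
  have key2 : Ideal.span {b} * (I * J) = Ideal.span {a} * (D * J) := by
    calc Ideal.span {b} * (I * J) = (Ideal.span {b} * I) * J := by ring
    _ = (Ideal.span {a} * D) * J := by rw [key]
    _ = Ideal.span {a} * (D * J) := by ring
  obtain ⟨e3⟩ := iso_of_span_mul_eq ha hb key2.symm
  exact ⟨(e1.prodCongr (LinearEquiv.refl R ↥J)).trans (e2.trans ((LinearEquiv.refl R R).prodCongr e3))⟩

theorem pi_iso_prod : ∀ (r : ℕ) (I : Fin (r + 1) → Ideal R) (_ : ∀ i, I i ≠ ⊥),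
    Nonempty (((i : Fin (r + 1)) → ↥(I i)) ≃ₗ[R] ((Fin r → R) × ↥(∏ i, I i))) := by
  intro r
  induction r with
  | zero =>
    intro I hI
    have h0 : I 0 = ∏ i, I i := by simp
    exact ⟨(piFinSuccLequiv (fun i => ↥(I i))).trans
      ((LinearEquiv.prodCongr (LinearEquiv.ofEq _ _ h0)
        (LinearEquiv.ofSubsingleton (((i : Fin 0) → ↥(I i.succ))) (Fin 0 → R))).trans
        (LinearEquiv.prodComm R ↥(∏ i, I i) (Fin 0 → R)))⟩
  | succ r ih =>
    intro I hI
    obtain ⟨e0⟩ := ih (fun i => I i.succ) (fun i => hI i.succ)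
    have hPT : (∏ i : Fin (r + 1), I i.succ) ≠ ⊥ := by
      rw [← Ideal.zero_eq_bot, Finset.prod_ne_zero_iff]
      exact fun i _ => hI i.succ
    obtain ⟨e1⟩ := pairIso (hI 0) hPT
    have hprod : I 0 * (∏ i : Fin (r + 1), I i.succ) = ∏ i, I i :=
      (Fin.prod_univ_succ I).symm
    exact ⟨piFinSuccLequiv (fun i => ↥(I i)) ≪≫ₗ
      (LinearEquiv.refl R ↥(I 0)).prodCongr e0 ≪≫ₗ
      swapLeftLequiv ↥(I 0) (Fin r → R) ↥(∏ i : Fin (r + 1), I i.succ) ≪≫ₗ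
      (LinearEquiv.refl R (Fin r → R)).prodCongr e1 ≪≫ₗ
      swapLeftLequiv (Fin r → R) R ↥(I 0 * ∏ i : Fin (r + 1), I i.succ) ≪≫ₗ
      (LinearEquiv.prodAssoc R _ _ _).symm ≪≫ₗ
      LinearEquiv.prodCongr (piFinSuccLequiv (fun _ : Fin (r + 1) => R)).symm
        (LinearEquiv.ofEq _ _ hprod)⟩

end F

end SteinitzAux

open SteinitzAux

/-- **Steinitz's theorem, part 2.**
Over a Dedekind domain `R` (not a field), for nonzero ideals `I₁,…,I_r` and `J₁,…,J_r`,
the `R`-modules `I₁ ⊕ … ⊕ I_r` and `J₁ ⊕ … ⊕ J_r` are isomorphic iff the products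
`I₁⋯I_r` and `J₁⋯J_r` have the same ideal class (i.e. agree up to multiplication by
nonzero principal ideals).  In particular `I₁ ⊕ … ⊕ I_r` is free of rank `r` iff
`I₁⋯I_r` is principal. -/
theorem steinitz_isomorphism_criterion
    {R : Type*} [CommRing R] [IsDedekindDomain R] (hR : ¬ IsField R)
    (r : ℕ) (hr : 1 ≤ r) (I J : Fin r → Ideal R)
    (hI : ∀ i, I i ≠ ⊥) (hJ : ∀ i, J i ≠ ⊥) :
    (Nonempty ((((i : Fin r) → ↥(I i)) : Type _) ≃ₗ[R] ((i : Fin r) → ↥(J i)))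
      ↔ ∃ a b : R, a ≠ 0 ∧ b ≠ 0 ∧
          Ideal.span {a} * (∏ i, I i) = Ideal.span {b} * (∏ i, J i))
    ∧
    (Nonempty ((((i : Fin r) → ↥(I i)) : Type _) ≃ₗ[R] (Fin r → R))
      ↔ (∏ i, I i).IsPrincipal) := by
  obtain ⟨r', rfl⟩ : ∃ r', r = r' + 1 := ⟨r - 1, (Nat.succ_pred_eq_of_pos hr).symm⟩
  have htop : (⊤ : Ideal R) ≠ ⊥ := fun h =>
    one_ne_zero ((Submodule.mem_bot R).mp (h ▸ Submodule.mem_top))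
  have hPI : (∏ i, I i) ≠ ⊥ := by
    rw [← Ideal.zero_eq_bot, Finset.prod_ne_zero_iff]
    intro i _
    rw [Ideal.zero_eq_bot]
    exact hI i
  constructor
  · constructor
    · rintro ⟨e⟩
      exact exists_span_mul_eq_of_pi_iso I J hI hJ e
    · rintro ⟨a, b, ha, hb, hab⟩
      obtain ⟨eI⟩ := pi_iso_prod r' I hI
      obtain ⟨eJ⟩ := pi_iso_prod r' J hJ
      obtain ⟨eP⟩ := iso_of_span_mul_eq ha hb hab
      exact ⟨eI.trans (((LinearEquiv.refl R (Fin r' → R)).prodCongr eP).trans eJ.symm)⟩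
  · constructor
    · rintro ⟨e⟩
      have eT : (Fin (r' + 1) → R) ≃ₗ[R]
          ((i : Fin (r' + 1)) → ↥((fun _ => (⊤ : Ideal R)) i)) :=
        LinearEquiv.piCongrRight fun i => Submodule.topEquiv.symm
      obtain ⟨a, b, ha, hb, hab⟩ := exists_span_mul_eq_of_pi_iso I (fun _ => (⊤ : Ideal R))
        hI (fun _ => htop) (e.trans eT)
      have hT : (∏ _i : Fin (r' + 1), (⊤ : Ideal R)) = ⊤ := by
        simp [← Ideal.one_eq_top]
      rw [hT, mul_top] at hab
      have hbmem : b ∈ Ideal.span {a} * (∏ i, I i) :=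
        hab ▸ Ideal.mem_span_singleton_self b
      have hba : b ∈ Ideal.span {a} := Ideal.mul_le_left hbmem
      obtain ⟨c, rfl⟩ := Ideal.mem_span_singleton.mp hba
      have hc : Ideal.span {a} * (∏ i, I i) = Ideal.span {a} * Ideal.span {c} := by
        rw [hab, Ideal.span_singleton_mul_span_singleton]
      have ha' : Ideal.span {a} ≠ (0 : Ideal R) := by
        simp only [Ideal.zero_eq_bot, ne_eq, Ideal.span_singleton_eq_bot]
        exact ha
      exact ⟨⟨c, by simpa using mul_left_cancel₀ ha' hc⟩⟩
    · rintro ⟨⟨c, hc⟩⟩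
      rw [Ideal.submodule_span_eq] at hc
      have hc0 : c ≠ 0 := by
        rintro rfl
        rw [Ideal.span_singleton_eq_bot.mpr rfl] at hc
        exact hPI hc
      have hspan : Ideal.span {(1 : R)} * (∏ i, I i) = Ideal.span {c} * ⊤ := by
        rw [Ideal.span_singleton_one, Ideal.top_mul, mul_top, hc]
      obtain ⟨eP⟩ := iso_of_span_mul_eq one_ne_zero hc0 hspan
      obtain ⟨eI⟩ := pi_iso_prod r' I hI
      exact ⟨eI ≪≫ₗ (LinearEquiv.refl R (Fin r' → R)).prodCongr (eP ≪≫ₗ Submodule.topEquiv) ≪≫ₗ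
        LinearEquiv.prodComm R (Fin r' → R) R ≪≫ₗ
        (piFinSuccLequiv (fun _ : Fin (r' + 1) => R)).symm⟩
end
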